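/- Let r > 0 and Ω a closed convex subset of a real Hilbert space, x ∈ ∂Ω, y ∈ Ω with ‖x−y‖ ≤ 2r. If every short arc of radius r joining x and y is contained in Ω, then y ∈ B̄(x − r·v, r) for every unit normal v to Ω at x. -/

import Mathlib

open Metric Set Filter
open scoped InnerProductSpace ENNReal Topology

variable {X : Type*} [NormedAddCommGroup X] [InnerProductSpace ℝ X] [CompleteSpace X]

/-- The "lens" of `x` and `y`: the intersection of all closed balls of radius `r`
containing both `x` and `y` (equal to the whole space if no such ball exists). -/
def lens (r : ℝ) (x y : X) : Set X :=
  ⋂ c ∈ {c : X | x ∈ closedBall c r ∧ y ∈ closedBall c r}, closedBall c r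

/-- A set `Ω` is `r`-convex if for all `x, y ∈ Ω` the lens of `x` and `y` is contained in `Ω`. -/
def IsRConvex (r : ℝ) (Ω : Set X) : Prop :=
  ∀ x ∈ Ω, ∀ y ∈ Ω, lens r x y ⊆ Ω

/-- `A` is a short arc of radius `r` joining `x` and `y`: either `x = y` and `A = {x}`,
or `x ≠ y` and `A` is the not-longer closed arc of a circle of radius `r`
(lying in a two-dimensional plane through its center `c`) through `x` and `y`.
The not-longer arc is characterized as `{z on the circle | ⟪v, z - c⟫ ≥ ⟪v, x - c⟫}`
for a nonzero vector `v` of the plane orthogonal to `x - y` with `⟪v, x - c⟫ ≥ 0`. -/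
def IsShortArc (r : ℝ) (x y : X) (A : Set X) : Prop :=
  (x = y ∧ A = {x}) ∨
  (x ≠ y ∧ ∃ (c v : X) (P : Submodule ℝ X), Module.finrank ℝ P = 2 ∧
    x - c ∈ P ∧ y - c ∈ P ∧ v ∈ P ∧ v ≠ 0 ∧
    ⟪v, x - y⟫_ℝ = 0 ∧ 0 ≤ ⟪v, x - c⟫_ℝ ∧
    ‖x - c‖ = r ∧ ‖y - c‖ = r ∧
    A = {z : X | z - c ∈ P ∧ ‖z - c‖ = r ∧ ⟪v, x - c⟫_ℝ ≤ ⟪v, z - c⟫_ℝ})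

/-- `Ω` possesses the arc property for radius `r` if every short arc of radius `r`
joining two points of `Ω` is contained in `Ω`. -/
def ArcProperty (r : ℝ) (Ω : Set X) : Prop :=
  ∀ x ∈ Ω, ∀ y ∈ Ω, ∀ A : Set X, IsShortArc r x y A → A ⊆ Ω
/-!
Write `x - y = d • u` with `‖u‖ = 1`. Normality at `y` gives `α := ⟪v, u⟫ ≥ 0`, and the claim
becomes `d ≤ 2 r α`. If `v` is parallel to `u`, then `v = u` and this is `d ≤ 2 r`. Otherwise
`v = α • u + β • w` with `w ⊥ u` a unit vector and `β > 0`. Consider the circle of radius `r`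
through `x` and `y` in the plane spanned by `u, w`, centred at `c = x - (d/2) • u - h • w` with
`h = √(r² - d²/4)`; its short arc is `{z | ⟪w, z - c⟫ ≥ h}`. If `r β < h`, then
`α² = 1 - β² > d² / (4 r²)`. Otherwise `c + r • v` lies on the short arc, hence in `Ω`, and
normality at `x` gives `r ≤ ⟪v, x - c⟫ ≤ ‖x - c‖ = r`. Equality in Cauchy–Schwarz forces
`c = x - r • v`, and `y` lies on the circle about `c`.
-/

section

variable {E : Type*} [NormedAddCommGroup E] [InnerProductSpace ℝ E] {r d h α β : ℝ} {x y u w v : E}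

theorem finrank_span_pair_of_orthonormal (hu : ‖u‖ = 1) (hw : ‖w‖ = 1) (huw : ⟪u, w⟫_ℝ = 0) :
    Module.finrank ℝ (Submodule.span ℝ {u, w}) = 2 := by
  have hon : Orthonormal ℝ ![u, w] := by
    rw [orthonormal_iff_ite]
    intro i j
    fin_cases i <;> fin_cases j <;>
      simp [hu, hw, huw, real_inner_comm u w]
  have := finrank_span_eq_card hon.linearIndependent
  rwa [Matrix.range_cons_cons_empty, Fintype.card_fin] at this

theorem norm_smul_add_smul_sq (hu : ‖u‖ = 1) (hw : ‖w‖ = 1) (huw : ⟪u, w⟫_ℝ = 0) (a b : ℝ) :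
    ‖a • u + b • w‖ ^ 2 = a ^ 2 + b ^ 2 := by
  rw [norm_add_sq_real, norm_smul, norm_smul, real_inner_smul_left, real_inner_smul_right, huw,
    hu, hw, mul_one, mul_one, Real.norm_eq_abs, Real.norm_eq_abs, sq_abs, sq_abs]
  ring

theorem inner_smul_add_smul_left (hu : ‖u‖ = 1) (huw : ⟪u, w⟫_ℝ = 0) (a b : ℝ) :
    ⟪u, a • u + b • w⟫_ℝ = a := by
  rw [inner_add_right, real_inner_smul_right, real_inner_smul_right, real_inner_self_eq_norm_sq,
    hu, huw]
  ring

theorem inner_smul_add_smul_right (hw : ‖w‖ = 1) (huw : ⟪u, w⟫_ℝ = 0) (a b : ℝ) :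
    ⟪w, a • u + b • w⟫_ℝ = b := by
  rw [inner_add_right, real_inner_smul_right, real_inner_smul_right, real_inner_self_eq_norm_sq,
    hw, real_inner_comm, huw]
  ring

theorem exists_orthonormal_decomposition (hu : ‖u‖ = 1) (hv : v ≠ ⟪v, u⟫_ℝ • u) :
    ∃ (w : E) (β : ℝ), 0 < β ∧ ‖w‖ = 1 ∧ ⟪u, w⟫_ℝ = 0 ∧ v = ⟪v, u⟫_ℝ • u + β • w := by
  set p := v - ⟪v, u⟫_ℝ • u
  have hp : 0 < ‖p‖ := norm_pos_iff.2 (sub_ne_zero.2 hv)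
  have hup : ⟪u, p⟫_ℝ = 0 := by
    rw [inner_sub_right, real_inner_smul_right, real_inner_self_eq_norm_sq, hu, real_inner_comm]
    ring
  refine ⟨‖p‖⁻¹ • p, ‖p‖, hp, ?_, ?_, ?_⟩
  · rw [norm_smul, norm_inv, norm_norm, inv_mul_cancel₀ hp.ne']
  · rw [real_inner_smul_right, hup, mul_zero]
  · rw [smul_smul, mul_inv_cancel₀ hp.ne', one_smul, add_sub_cancel]

theorem mem_closedBall_sub_smul_iff (hv : ‖v‖ = 1) (hr : 0 ≤ r) :
    y ∈ closedBall (x - r • v) r ↔ ‖x - y‖ ^ 2 ≤ 2 * r * ⟪v, x - y⟫_ℝ := by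
  have hdist : dist y (x - r • v) ^ 2 = r ^ 2 - 2 * r * ⟪v, x - y⟫_ℝ + ‖x - y‖ ^ 2 := by
    rw [dist_eq_norm, show y - (x - r • v) = r • v - (x - y) by abel, norm_sub_sq_real,
      norm_smul, real_inner_smul_left, Real.norm_eq_abs, abs_of_nonneg hr, hv]
    ring
  rw [mem_closedBall, ← sq_le_sq₀ dist_nonneg hr, hdist]
  constructor <;> intro h <;> linarith

/-- The equality case of Cauchy–Schwarz. -/
theorem eq_sub_smul_of_inner_nonpos {c : E} (hv : ‖v‖ = 1) (hxc : ‖x - c‖ = r)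
    (hnormal : ⟪v, c + r • v - x⟫_ℝ ≤ 0) : c = x - r • v := by
  have hle : r ≤ ⟪v, x - c⟫_ℝ := by
    rw [show c + r • v - x = r • v - (x - c) by abel, inner_sub_right, real_inner_smul_right,
      real_inner_self_eq_norm_sq, hv] at hnormal
    linarith
  have heq : ⟪v, x - c⟫_ℝ = ‖v‖ * ‖x - c‖ :=
    le_antisymm (real_inner_le_norm _ _) (by rw [hv, hxc, one_mul]; exact hle)
  rw [inner_eq_norm_mul_iff_real, hv, hxc, one_smul] at heq
  rw [heq, sub_sub_cancel]

theorem mem_closedBall_sub_smul_of_mul_lt (hu : ‖u‖ = 1) (hw : ‖w‖ = 1) (huw : ⟪u, w⟫_ℝ = 0)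
    (hv : ‖v‖ = 1) (hvuw : v = α • u + β • w) (hα : 0 ≤ α) (hβ : 0 ≤ β) (hr : 0 ≤ r)
    (hd : 0 ≤ d) (hxy : x - y = d • u) (hdh : (d / 2) ^ 2 + h ^ 2 = r ^ 2) (hlow : r * β < h) :
    y ∈ closedBall (x - r • v) r := by
  have hαβ : α ^ 2 + β ^ 2 = 1 := by
    rw [← norm_smul_add_smul_sq hu hw huw, ← hvuw, hv, one_pow]
  have hvu : ⟪v, u⟫_ℝ = α := by
    rw [real_inner_comm, hvuw, inner_smul_add_smul_left hu huw]
  have hsq : (d / 2) ^ 2 < (r * α) ^ 2 := by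
    have : (r * β) ^ 2 < h ^ 2 := pow_lt_pow_left₀ hlow (mul_nonneg hr hβ) two_ne_zero
    nlinarith
  have hlt : d / 2 < r * α := lt_of_pow_lt_pow_left₀ 2 (mul_nonneg hr hα) hsq
  rw [mem_closedBall_sub_smul_iff hv hr, hxy, norm_smul, Real.norm_eq_abs, abs_of_nonneg hd, hu,
    real_inner_smul_right, hvu]
  nlinarith

theorem mem_closedBall_sub_smul_of_orthonormal {Ω : Set E} (hu : ‖u‖ = 1) (hw : ‖w‖ = 1)
    (huw : ⟪u, w⟫_ℝ = 0) (hv : ‖v‖ = 1) (hvuw : v = α • u + β • w) (hα : 0 ≤ α) (hβ : 0 ≤ β)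
    (hd : 0 < d) (hdr : d ≤ 2 * r) (hxy : x - y = d • u)
    (harc : ∀ A : Set E, IsShortArc r x y A → A ⊆ Ω) (hnormal : ∀ z ∈ Ω, ⟪v, z - x⟫_ℝ ≤ 0) :
    y ∈ closedBall (x - r • v) r := by
  have hr : 0 < r := by linarith
  obtain ⟨h, hh, hdh⟩ : ∃ h : ℝ, 0 ≤ h ∧ (d / 2) ^ 2 + h ^ 2 = r ^ 2 :=
    ⟨√(r ^ 2 - (d / 2) ^ 2), Real.sqrt_nonneg _, by rw [Real.sq_sqrt (by nlinarith)]; ring⟩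
  rcases lt_or_ge (r * β) h with hlow | hhigh
  · exact mem_closedBall_sub_smul_of_mul_lt hu hw huw hv hvuw hα hβ hr.le hd.le hxy hdh hlow
  set c := x - ((d / 2) • u + h • w)
  set P := Submodule.span ℝ {u, w}
  have hmem (a b : ℝ) : a • u + b • w ∈ P := Submodule.mem_span_pair.2 ⟨a, b, rfl⟩
  have hxc : x - c = (d / 2) • u + h • w := sub_sub_cancel _ _
  have hyc : y - c = (-(d / 2)) • u + h • w := by
    rw [show y - c = (x - c) - (x - y) by abel, hxc, hxy]
    module
  have hxcn : ‖x - c‖ = r := (sq_eq_sq₀ (norm_nonneg _) hr.le).1 <| by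
    rw [hxc, norm_smul_add_smul_sq hu hw huw, hdh]
  have hycn : ‖y - c‖ = r := (sq_eq_sq₀ (norm_nonneg _) hr.le).1 <| by
    rw [hyc, norm_smul_add_smul_sq hu hw huw, neg_sq, hdh]
  have hwxc : ⟪w, x - c⟫_ℝ = h := by rw [hxc, inner_smul_add_smul_right hw huw]
  have hA : IsShortArc r x y {z | z - c ∈ P ∧ ‖z - c‖ = r ∧ ⟪w, x - c⟫_ℝ ≤ ⟪w, z - c⟫_ℝ} := by
    refine Or.inr ⟨?_, c, w, P, finrank_span_pair_of_orthonormal hu hw huw, hxc ▸ hmem _ _,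
      hyc ▸ hmem _ _, Submodule.subset_span (by simp),
      norm_ne_zero_iff.1 (by rw [hw]; exact one_ne_zero), ?_, hwxc ▸ hh, hxcn, hycn, rfl⟩
    · rintro rfl
      exact hd.ne (by simpa [norm_smul, hu, abs_of_pos hd] using congrArg norm hxy)
    · rw [hxy, real_inner_smul_right, real_inner_comm, huw, mul_zero]
  have hz : c + r • v ∈ Ω := by
    refine harc _ hA ⟨?_, ?_, ?_⟩ <;> rw [add_sub_cancel_left]
    · exact P.smul_mem r (hvuw ▸ hmem α β)
    · rw [norm_smul, hv, Real.norm_eq_abs, abs_of_pos hr, mul_one]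
    · rwa [hwxc, real_inner_smul_right, hvuw, inner_smul_add_smul_right hw huw]
  rw [← eq_sub_smul_of_inner_nonpos hv hxcn (hnormal _ hz), mem_closedBall, dist_eq_norm, hycn]

end

theorem mem_closedBall_of_arcProperty_pair_general {r : ℝ} {Ω : Set X} {x y : X}
    (hy : y ∈ Ω) (hxy : ‖x - y‖ ≤ 2 * r)
    (harc : ∀ A : Set X, IsShortArc r x y A → A ⊆ Ω)
    (v : X) (hv : ‖v‖ = 1) (hnormal : ∀ z ∈ Ω, ⟪v, z - x⟫_ℝ ≤ 0) :
    y ∈ closedBall (x - r • v) r := by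
  have hr : 0 ≤ r := by linarith [norm_nonneg (x - y)]
  rcases eq_or_ne x y with rfl | hne
  · rw [mem_closedBall_sub_smul_iff hv hr, sub_self, norm_zero, inner_zero_right]
    norm_num
  set d := ‖x - y‖
  have hd : 0 < d := norm_pos_iff.2 (sub_ne_zero.2 hne)
  set u := d⁻¹ • (x - y)
  have hu : ‖u‖ = 1 := by rw [norm_smul, norm_inv, norm_norm, inv_mul_cancel₀ hd.ne']
  have hxyu : x - y = d • u := by rw [smul_smul, mul_inv_cancel₀ hd.ne', one_smul]
  have hα : 0 ≤ ⟪v, u⟫_ℝ := by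
    have := hnormal y hy
    rw [← neg_sub, hxyu, inner_neg_right, real_inner_smul_right] at this
    nlinarith
  by_cases hpar : v = ⟪v, u⟫_ℝ • u
  · have hα1 : ⟪v, u⟫_ℝ = 1 := by
      rw [hpar, norm_smul, hu, mul_one, Real.norm_eq_abs, abs_of_nonneg hα] at hv
      exact hv
    have hinner : ⟪v, x - y⟫_ℝ = d := by rw [hxyu, real_inner_smul_right, hα1, mul_one]
    rw [mem_closedBall_sub_smul_iff hv hr, hinner]
    nlinarith
  obtain ⟨w, β, hβ, hw, huw, hvuw⟩ := exists_orthonormal_decomposition hu hpar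
  exact mem_closedBall_sub_smul_of_orthonormal hu hw huw hv hvuw hα hβ.le hd hxy hxyu harc hnormal

/-- If `Ω` is closed and convex, `x ∈ ∂Ω`, `y ∈ Ω` with `‖x - y‖ ≤ 2r`, and every short
arc of radius `r` joining `x` and `y` is contained in `Ω`, then `y ∈ B̄(x - r·v, r)`
for every unit normal `v` to `Ω` at `x`. -/
theorem mem_closedBall_of_arcProperty_pair (hdim : 2 ≤ Module.rank ℝ X) {r : ℝ}
    (hr : 0 < r) {Ω : Set X} (hcl : IsClosed Ω) (hconv : Convex ℝ Ω) {x y : X}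
    (hx : x ∈ frontier Ω) (hy : y ∈ Ω) (hxy : ‖x - y‖ ≤ 2 * r)
    (harc : ∀ A : Set X, IsShortArc r x y A → A ⊆ Ω)
    (v : X) (hv : ‖v‖ = 1) (hnormal : ∀ z ∈ Ω, ⟪v, z - x⟫_ℝ ≤ 0) :
    y ∈ closedBall (x - r • v) r :=
  mem_closedBall_of_arcProperty_pair_general hy hxy harc v hv hnormal
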